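/- arXiv:2404.00212 — 6 statements merged into one kernel-verified Lean document; each statement's English description precedes it below -/
import Mathlib

section
/- If a subset Σ of propositions contains the true proposition and is closed under dependent sums (i.e., for φ ∈ Σ and f : φ → Σ, the proposition Σ_{u:φ} f(u) is in Σ), then the lifting operation L(A) = Σ_{φ ∈ Σ} (φ → A) carries a monad structure: there exist unit η : A → L(A) and multiplication μ : L(L(A)) → L(A) satisfying the monad laws. -/
/-- The lift of a type `A` relative to a collection `S` of propositions:
pairs of a proposition `φ ∈ S` together with a partial element `φ → A`. -/
def Lft (S : Prop → Prop) (A : Type) : Type :=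
  Σ φ : {p : Prop // S p}, φ.1 → A

theorem Lft.ext' {S : Prop → Prop} {A : Type} {x y : Lft S A}
    (h1 : x.1.1 ↔ y.1.1) (h2 : ∀ u v, x.2 u = y.2 v) : x = y := by
  obtain ⟨⟨p, hp⟩, f⟩ := x
  obtain ⟨⟨q, hq⟩, g⟩ := y
  have hpq : p = q := propext h1
  subst hpq
  have : f = g := funext fun u => h2 u u
  subst this
  rfl

/-- If `S` is a dominance (contains `⊤` and is closed under dependent sums),
then the lifting operation `L(A)` carries a monad structure: there exist a
functorial action, a unit `η` and a multiplication `μ` satisfying the monad laws. -/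
theorem stmt0 (S : Prop → Prop)
    (htop : S True)
    (hdsum : ∀ (φ : Prop), S φ → ∀ f : φ → Prop, (∀ u, S (f u)) → S (∃ u, f u)) :
    ∃ (map : ∀ A B : Type, (A → B) → Lft S A → Lft S B)
      (η : ∀ A : Type, A → Lft S A)
      (μ : ∀ A : Type, Lft S (Lft S A) → Lft S A),
      -- functoriality
      (∀ A : Type, map A A id = id) ∧
      (∀ (A B C : Type) (f : A → B) (g : B → C),
        map B C g ∘ map A B f = map A C (g ∘ f)) ∧
      -- naturality of η and μ
      (∀ (A B : Type) (f : A → B), map A B f ∘ η A = η B ∘ f) ∧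
      (∀ (A B : Type) (f : A → B),
        map A B f ∘ μ A = μ B ∘ map (Lft S A) (Lft S B) (map A B f)) ∧
      -- monad laws
      (∀ A : Type, μ A ∘ η (Lft S A) = id) ∧
      (∀ A : Type, μ A ∘ map A (Lft S A) (η A) = id) ∧
      (∀ A : Type,
        μ A ∘ map (Lft S (Lft S A)) (Lft S A) (μ A) = μ A ∘ μ (Lft S A)) := by
  refine ⟨fun A B f x => ⟨x.1, f ∘ x.2⟩,
    fun A a => ⟨⟨True, htop⟩, fun _ => a⟩,
    fun A x => ⟨⟨∃ u : x.1.1, (x.2 u).1.1,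
      hdsum x.1.1 x.1.2 _ (fun u => (x.2 u).1.2)⟩,
      fun h => (x.2 (h.elim fun u _ => u)).2 (h.elim fun _ v => v)⟩,
    ?_, ?_, ?_, ?_, ?_, ?_, ?_⟩
  · intro A; funext x; exact Lft.ext' Iff.rfl (fun u v => rfl)
  · intro A B C f g; funext x; exact Lft.ext' Iff.rfl (fun u v => rfl)
  · intro A B f; funext a; exact Lft.ext' Iff.rfl (fun u v => rfl)
  · intro A B f; funext x; exact Lft.ext' Iff.rfl (fun u v => rfl)
  · intro A; funext x
    refine Lft.ext' ⟨fun h => h.elim fun _ v => v, fun h => ⟨trivial, h⟩⟩ (fun u v => rfl)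
  · intro A; funext x
    refine Lft.ext' ⟨fun h => h.elim fun u _ => u, fun h => ⟨h, trivial⟩⟩ (fun u v => rfl)
  · intro A; funext x
    refine Lft.ext' ?_ (fun u v => rfl)
    constructor
    · rintro ⟨u, v, w⟩; exact ⟨⟨u, v⟩, w⟩
    · rintro ⟨⟨u, v⟩, w⟩; exact ⟨u, v, w⟩
end

section
/- The path order on a function space into a boundary-separated type is pointwise: for types X and B with B boundary separated, f ⊴ g in X → B (i.e., there is a path α : Σ → (X → B) with α(⊥) = f, α(⊤) = g) if and only if f(x) ⊴ g(x) in B for every x : X. -/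
/-- The path relation relative to a dominance `S`. -/
def PathLe (S : Prop → Prop) (hT : S True) (hF : S False)
    {A : Type} (x y : A) : Prop :=
  ∃ l : {p : Prop // S p} → A, l ⟨False, hF⟩ = x ∧ l ⟨True, hT⟩ = y

/-- The path order on a function space into a boundary-separated type is
pointwise: `f ⊴ g` in `X → B` iff `f x ⊴ g x` in `B` for every `x`. -/
theorem stmt7 (S : Prop → Prop) (hT : S True) (hF : S False)
    (X B : Type)
    (hB_bsep : ∀ l l' : {p : Prop // S p} → B,
      l ⟨False, hF⟩ = l' ⟨False, hF⟩ → l ⟨True, hT⟩ = l' ⟨True, hT⟩ → l = l')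
    (f g : X → B) :
    PathLe S hT hF f g ↔ ∀ x : X, PathLe S hT hF (f x) (g x) := by
  constructor
  · rintro ⟨l, h0, h1⟩ x
    exact ⟨fun s => l s x, by simp [h0], by simp [h1]⟩
  · intro h
    choose l h0 h1 using h
    exact ⟨fun s x => l x s, funext fun x => h0 x, funext fun x => h1 x⟩
end

section
/- A lower subset of a complete type is complete if it is closed under synthetic ω-joins: if S ⊆ A is downward closed in the intrinsic preorder, A is complete (orthogonal to ω ↪ ω̄), and for every chain f : ω → A landing in S the join sup f lies in S, then S (as a type) is orthogonal to ω ↪ ω̄. -/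
/-- The intrinsic (specialization) preorder relative to `S`. -/
def IntrLe (S : Prop → Prop) {A : Type} (x y : A) : Prop :=
  ∀ f : A → {p : Prop // S p}, (f x).1 → (f y).1

/-- A lower subset of a complete type is complete when it is closed under
synthetic ω-joins: if `P ⊆ A` is downward closed in the intrinsic preorder,
`A` is orthogonal to `ω ↪ ω̄`, `∞` is the top element of `ω̄`, maps
`ω̄ → A` are monotone, and `P` contains the join `f̄(∞)` of every chain
`f : ω → A` landing in `P`, then the subtype `{a // P a}` is orthogonal to
`ω ↪ ω̄`. -/
theorem stmt11 (S : Prop → Prop)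
    (Om OmBar A : Type) (incl : Om → OmBar) (infty : OmBar)
    (P : A → Prop)
    (hcomp : ∀ g : Om → A, ∃! gb : OmBar → A, ∀ i, gb (incl i) = g i)
    (hlow : ∀ a b : A, IntrLe S a b → P b → P a)
    (hmono : ∀ h : OmBar → A, ∀ i j : OmBar,
      IntrLe S i j → IntrLe S (h i) (h j))
    (htop : ∀ j : OmBar, IntrLe S j infty)
    (hclosed : ∀ (f : Om → A) (fb : OmBar → A),
      (∀ i, fb (incl i) = f i) → (∀ i, P (f i)) → P (fb infty)) :
    ∀ g : Om → {a : A // P a},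
      ∃! gb : OmBar → {a : A // P a}, ∀ i, gb (incl i) = g i := by
  intro g
  obtain ⟨fb, hfb, huniq⟩ := hcomp (fun i => (g i).1)
  have hPinf : P (fb infty) := hclosed _ fb hfb (fun i => (g i).2)
  have hP : ∀ j, P (fb j) := fun j =>
    hlow _ _ (hmono fb j infty (htop j)) hPinf
  refine ⟨fun j => ⟨fb j, hP j⟩, fun i => Subtype.ext (hfb i), ?_⟩
  intro gb' hgb'
  funext j
  have : (fun j => (gb' j).1) = fb := huniq _ (fun i => congrArg Subtype.val (hgb' i))
  exact Subtype.ext (congrFun this j)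
end

section
/- If A has Σ-equality then the sealed type P ∨ A also has Σ-equality, where P ∨ A is the pushout of the projections A × P → A and A × P → P (equivalently the quotient of A + P identifying η(a) with ⋆(u) for every a : A, u : P), and P is a Σ-proposition. -/
/-- The sealing `P ∨ A`: the pushout of the projections `A × P → A` and
`A × P → P`, i.e. the quotient of `A ⊕ P` identifying `η a` with `⋆ u` for
every `a : A` and `u : P` (hence identifying everything when `P` holds). -/
def Seal (P : Prop) (A : Type) : Type :=
  Quot (fun x y : A ⊕ PLift P => x = y ∨ P)

/-- The unit `η : A → P ∨ A`. -/
def Seal.eta {P : Prop} {A : Type} (a : A) : Seal P A :=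
  Quot.mk _ (Sum.inl a)

/-- The point `⋆ : P → P ∨ A`. -/
def Seal.star {P : Prop} {A : Type} (u : P) : Seal P A :=
  Quot.mk _ (Sum.inr ⟨u⟩)

/-- When `¬ P`, the unit `η` is injective. -/
lemma seal_eta_eq_iff {P : Prop} {A : Type} (hp : ¬ P) (x y : A) :
    (Seal.eta x : Seal P A) = Seal.eta y ↔ x = y := by
  constructor
  · intro h
    have hresp : ∀ a b : A ⊕ PLift P, (a = b ∨ P) →
        ((Sum.inl x : A ⊕ PLift P) = a ∨ P) = ((Sum.inl x : A ⊕ PLift P) = b ∨ P) := by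
      rintro a b (rfl | hpp)
      · rfl
      · exact propext ⟨fun _ => Or.inr hpp, fun _ => Or.inr hpp⟩
    have hF : Quot.lift (fun z : A ⊕ PLift P => (Sum.inl x : A ⊕ PLift P) = z ∨ P) hresp
        (Seal.eta x) := Or.inl rfl
    rw [h] at hF
    rcases hF with h' | hpp
    · exact Sum.inl.inj h'
    · exact absurd hpp hp
  · rintro rfl; rfl

/-- If `A` has Σ-equality then the sealed type `P ∨ A` also has Σ-equality,
where `Σ` is a dominance containing the phase proposition `P`. -/
theorem stmt14 (S : Prop → Prop) (P : Prop)
    (hT : S True) (hP : S P)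
    (hdsum : ∀ (φ : Prop), S φ → ∀ f : φ → Prop, (∀ u, S (f u)) → S (∃ u, f u))
    (A : Type) (heq : ∀ x y : A, S (x = y)) :
    ∀ u v : Seal P A, S (u = v) := by
  intro u v
  by_cases hp : P
  · -- `P` holds: the seal is contractible, so `u = v` is `True`.
    have huv : u = v := by
      induction u using Quot.inductionOn with
      | h a =>
        induction v using Quot.inductionOn with
        | h b => exact Quot.sound (Or.inr hp)
    rw [eq_true huv]; exact hT
  · induction u using Quot.inductionOn with
    | h a =>
      induction v using Quot.inductionOn with
      | h b =>
        cases a with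
        | inl x =>
          cases b with
          | inl y =>
            show S ((Seal.eta x : Seal P A) = Seal.eta y)
            rw [propext (seal_eta_eq_iff hp x y)]
            exact heq x y
          | inr p => exact absurd p.down hp
        | inr p => exact absurd p.down hp
end

section
/- Big-step composition of evaluation costs: if eval(e, ret v) = c₁ (defined) and eval(g v, ret w) = c₂ (defined), then eval(e; g, ret w) = c₁ + c₂, where e; g denotes sequential composition (bind) and costs are accumulated in the monoid ℂ. -/
open Classical in
/-- Step-indexed evaluation: iterate the deterministic step function `out`,
accumulating costs. -/
noncomputable def evalN {Tm C : Type} [AddMonoid C]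
    (out : Tm → Option (C × Tm)) : ℕ → Tm → Tm → Option C
  | 0, _, _ => none
  | n + 1, e, v =>
    match out e with
    | some (c, e') => (evalN out n e' v).map (fun c' => c + c')
    | none => if e = v then some 0 else none

/-- `eval(e, v) = c`: some finite iteration of the step function evaluates
`e` to the value `v` with total cost `c`. -/
def EvalRel {Tm C : Type} [AddMonoid C]
    (out : Tm → Option (C × Tm)) (e v : Tm) (c : C) : Prop :=
  ∃ n, evalN out n e v = some c

/-- Big-step composition of evaluation costs: if `eval(e, ret v) = c₁` and
`eval(g v, ret w) = c₂`, then `eval(e; g, ret w) = c₁ + c₂`, given the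
small-step laws for sequencing. -/
theorem stmt17 {Tm C : Type} [AddMonoid C]
    (out : Tm → Option (C × Tm))
    (ret : Tm → Tm) (seq : Tm → (Tm → Tm) → Tm)
    (hret_val : ∀ v, out (ret v) = none)
    (hseq_ret : ∀ v g, out (seq (ret v) g) = some (0, g v))
    (hseq_step : ∀ e c e' g, out e = some (c, e') →
      out (seq e g) = some (c, seq e' g))
    (e : Tm) (g : Tm → Tm) (v w : Tm) (c₁ c₂ : C)
    (h1 : EvalRel out e (ret v) c₁) (h2 : EvalRel out (g v) (ret w) c₂) :
    EvalRel out (seq e g) (ret w) (c₁ + c₂) := by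
  obtain ⟨n, h1⟩ := h1
  obtain ⟨m, h2⟩ := h2
  induction n generalizing e c₁ with
  | zero => simp [evalN] at h1
  | succ n ih =>
    rw [evalN] at h1
    cases hout : out e with
    | some p =>
      obtain ⟨c, e'⟩ := p
      rw [hout] at h1
      simp only [Option.map_eq_some_iff] at h1
      obtain ⟨c₁', he', rfl⟩ := h1
      obtain ⟨k, hk⟩ := ih e' c₁' he'
      refine ⟨k + 1, ?_⟩
      rw [evalN, hseq_step e c e' g hout]
      simp [hk, add_assoc]
    | none =>
      rw [hout] at h1
      simp only at h1
      split at h1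
      · rename_i heq
        subst heq
        refine ⟨m + 1, ?_⟩
        rw [evalN, hseq_ret v g]
        simp only [Option.some.injEq] at h1
        simp [h2, ← h1]
      · simp at h1
end

section
/- Noninterference of cost and behavior at the denotational level: for any purely extensional type B and purely intensional type ℂ, every map f : ℂ → L(B) is weakly constant — for all x, y : ℂ, if f(x)↓ and f(y)↓ then the values of f(x) and f(y) in B are equal. -/
/-- Noninterference of cost and behavior at the denotational level: for any
purely extensional type `B` (the canonical map `B → (P → B)` is a bijection)
and purely intensional type `ℂ` (the type `P → ℂ` is contractible), every
map `f : ℂ → L(B)` is weakly constant: if `f x` and `f y` are both defined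
then their values in `B` are equal. -/
theorem stmt19 (S : Prop → Prop) (P : Prop) (hP : S P)
    (B Cc : Type)
    (hext : Function.Bijective (fun (b : B) => fun (_ : P) => b))
    (hint : ∃ g : P → Cc, ∀ h : P → Cc, h = g)
    (f : Cc → Σ φ : {p : Prop // S p}, φ.1 → B)
    (x y : Cc) (hx : (f x).1.1) (hy : (f y).1.1) :
    (f x).2 hx = (f y).2 hy := by
  apply hext.injective
  funext p
  obtain ⟨g, hg⟩ := hint
  have hxy : x = y := by
    have := congrFun ((hg (fun _ => x)).trans (hg (fun _ => y)).symm) p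
    simpa using this
  subst hxy
  rfl
end
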